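/- If a graph G contains no W₄ (the wheel on 5 vertices: C₄ plus a universal vertex) as an induced minor, then the Hadwiger number of G satisfies η(G) ≤ ω(G) + 5. -/

import Mathlib

open SimpleGraph

/-- `X` is a minor model of `H` in `G`: pairwise disjoint connected bags, with an edge of `G`
between the bags of any two adjacent vertices of `H`. -/
def IsMinorModel {α V : Type*} (H : SimpleGraph α) (G : SimpleGraph V) (X : α → Set V) : Prop :=
  (∀ u v, u ≠ v → Disjoint (X u) (X v)) ∧
  (∀ u, (G.induce (X u)).Connected) ∧
  (∀ ⦃u v⦄, H.Adj u v → ∃ a ∈ X u, ∃ b ∈ X v, G.Adj a b)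

/-- `X` is an induced minor model of `H` in `G`: pairwise disjoint connected bags, with an edge
of `G` between two bags if and only if the corresponding vertices of `H` are adjacent. -/
def IsInducedMinorModel {α V : Type*} (H : SimpleGraph α) (G : SimpleGraph V)
    (X : α → Set V) : Prop :=
  (∀ u v, u ≠ v → Disjoint (X u) (X v)) ∧
  (∀ u, (G.induce (X u)).Connected) ∧
  (∀ u v, u ≠ v → ((∃ a ∈ X u, ∃ b ∈ X v, G.Adj a b) ↔ H.Adj u v))

/-- `G` contains `H` as a minor. -/
def HasMinor {V α : Type*} (G : SimpleGraph V) (H : SimpleGraph α) : Prop :=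
  ∃ X, IsMinorModel H G X

/-- `G` contains `H` as an induced minor. -/
def HasInducedMinor {V α : Type*} (G : SimpleGraph V) (H : SimpleGraph α) : Prop :=
  ∃ X, IsInducedMinorModel H G X

/-- The Hadwiger number of `G`: the largest `p` such that `K_p` is a minor of `G`. -/
noncomputable def hadwigerNumber {V : Type*} (G : SimpleGraph V) : ℕ :=
  sSup {p | HasMinor G (⊤ : SimpleGraph (Fin p))}

/-- The 4-wheel `W₄`: the 4-cycle on `{0,1,2,3}` together with the universal vertex `4`. -/
def wheel4 : SimpleGraph (Fin 5) :=
  SimpleGraph.fromRel (fun i j => j = 4 ∨ (i.val < 4 ∧ j.val < 4 ∧ j.val = (i.val + 1) % 4))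

/-!
Take a model of `K_p` in `G` with as few vertices as possible. If a bag `X i` splits into two
connected parts that are both touched by another bag `X r`, minimality provides bags `X P` and
`X Q` touching only one part each, and the two parts, `X Q`, `X P` and the hub `X r` form a `W₄`.
So any two bags are joined by a single edge, between their attachment vertices. Similar `W₄`s
show that each bag has at most one heavy vertex (attachment of two other bags), that every other
non-cut vertex of a bag is the attachment of exactly one bag, its owner, and that the owners of
such private leaves in different bags essentially coincide. Hence, outside a set of at most three
bags, every bag has all the other remaining bags attached at one vertex; these vertices form a
clique, so `p ≤ ω(G) + 3`.
-/

namespace SimpleGraph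

variable {V : Type*} {G : SimpleGraph V}

def Touches (G : SimpleGraph V) (A B : Set V) : Prop := ∃ a ∈ A, ∃ b ∈ B, G.Adj a b

lemma Touches.symm {A B : Set V} (h : G.Touches A B) : G.Touches B A :=
  let ⟨a, ha, b, hb, hab⟩ := h; ⟨b, hb, a, ha, hab.symm⟩

lemma Touches.diff {A B C : Set V} (h : G.Touches A B) (hC : ¬ G.Touches A C) :
    G.Touches A (B \ C) :=
  let ⟨a, ha, b, hb, hab⟩ := h
  ⟨a, ha, b, ⟨hb, fun hbC => hC ⟨a, ha, b, hbC, hab⟩⟩, hab⟩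

lemma Touches.mono {A A' B B' : Set V} (h : G.Touches A B) (hA : A ⊆ A') (hB : B ⊆ B') :
    G.Touches A' B' :=
  let ⟨a, ha, b, hb, hab⟩ := h; ⟨a, hA ha, b, hB hb, hab⟩

@[simp]
lemma touches_singleton_left {v : V} {B : Set V} : G.Touches {v} B ↔ ∃ b ∈ B, G.Adj v b := by
  simp [Touches]

lemma Connected.touches_diff {S A : Set V} (hS : (G.induce S).Connected) (hAS : A ⊆ S)
    (hA : A.Nonempty) (hA' : (S \ A).Nonempty) : G.Touches A (S \ A) := by
  obtain ⟨a, ha⟩ := hA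
  obtain ⟨b, hbS, hbA⟩ := hA'
  obtain ⟨p⟩ := hS.preconnected ⟨a, hAS ha⟩ ⟨b, hbS⟩
  obtain ⟨d, -, hd, hd'⟩ := p.exists_boundary_dart (Subtype.val ⁻¹' A) ha hbA
  exact ⟨d.fst, hd, d.snd, ⟨d.snd.2, hd'⟩, d.adj⟩

lemma nonempty_of_connected_induce {S : Set V} (hS : (G.induce S).Connected) : S.Nonempty :=
  Set.nonempty_coe_sort.1 hS.nonempty

lemma connected_induce_singleton (v : V) : (G.induce {v}).Connected := by
  rw [induce_singleton_eq_top]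
  exact connected_top

lemma Connected.exists_ne_connected_induce_diff_singleton [Finite V] {S : Set V}
    (hS : (G.induce S).Connected) (hnt : S.Nontrivial) :
    ∃ v ∈ S, ∃ w ∈ S, v ≠ w ∧
      (G.induce (S \ {v})).Connected ∧ (G.induce (S \ {w})).Connected := by
  classical
  have : Nontrivial S := hnt.coe_sort
  have := Fintype.ofFinite S
  obtain ⟨T, hTS, hT⟩ := hS.exists_isTree_le
  have hleaf : ∀ a : S, T.degree a = 1 → (G.induce (S \ {a.1})).Connected := by
    intro a ha
    refine (hT.connected.induce_compl_singleton_of_degree_eq_one ha).map ?_ ?_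
    · exact ⟨fun x => ⟨x.1.1, x.1.2, fun h => x.2 (Subtype.ext h)⟩, fun h => hTS h⟩
    · rintro ⟨x, hxS, hxa⟩
      exact ⟨⟨⟨x, hxS⟩, fun h => hxa (congrArg Subtype.val h)⟩, rfl⟩
  obtain ⟨a, b, hab, ha, hb⟩ := hT.exists_ne_and_degree_eq_one
  exact ⟨a, a.2, b, b.2, fun h => hab (Subtype.ext h), hleaf a ha, hleaf b hb⟩

lemma Connected.exists_connected_induce_diff_singleton [Finite V] {S : Set V}
    (hS : (G.induce S).Connected) (hnt : S.Nontrivial) (u : V) :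
    ∃ v ∈ S, v ≠ u ∧ (G.induce (S \ {v})).Connected := by
  obtain ⟨v, hv, w, hw, hvw, hSv, hSw⟩ := hS.exists_ne_connected_induce_diff_singleton hnt
  by_cases hvu : v = u
  · exact ⟨w, hw, hvu ▸ hvw.symm, hSw⟩
  · exact ⟨v, hv, hvu, hSv⟩

lemma Connected.exists_connected_induce_partition [Finite V] {S : Set V}
    (hS : (G.induce S).Connected) {u w : V} (hu : u ∈ S) (hw : w ∈ S) (huw : u ≠ w) :
    ∃ A ⊆ S, u ∈ A ∧ w ∉ A ∧ (G.induce A).Connected ∧ (G.induce (S \ A)).Connected := by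
  induction S using WellFoundedLT.induction with
  | ind S ih =>
  obtain ⟨v, hvS, hvu, hSv⟩ := hS.exists_connected_induce_diff_singleton ⟨u, hu, w, hw, huw⟩ u
  by_cases hvw : v = w
  · subst hvw
    refine ⟨S \ {v}, Set.sdiff_subset, ⟨hu, hvu.symm⟩, fun h => h.2 rfl, hSv, ?_⟩
    rw [Set.sdiff_sdiff_cancel_left (Set.singleton_subset_iff.2 hvS)]
    exact connected_induce_singleton v
  obtain ⟨A, hAS, huA, hwA, hA, hSA⟩ := ih (S \ {v}) (Set.sdiff_singleton_ssubset.2 hvS) hSv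
    ⟨hu, hvu.symm⟩ ⟨hw, Ne.symm hvw⟩
  obtain ⟨y, hy, hvy⟩ := touches_singleton_left.1 <|
    hS.touches_diff (Set.singleton_subset_iff.2 hvS) (Set.singleton_nonempty v) ⟨u, hu, hvu.symm⟩
  by_cases hyA : y ∈ A
  · refine ⟨A ∪ {v}, Set.union_subset (hAS.trans Set.sdiff_subset) (Set.singleton_subset_iff.2 hvS),
      Or.inl huA, ?_, connected_induce_union hA.preconnected
        (connected_induce_singleton v).preconnected hyA rfl hvy.symm, ?_⟩
    · rintro (h | rfl)
      exacts [hwA h, hvw rfl]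
    · rwa [Set.sdiff_sdiff, Set.union_comm] at hSA
  · refine ⟨A, hAS.trans Set.sdiff_subset, huA, hwA, hA, ?_⟩
    have hvA : v ∉ A := fun h => (hAS h).2 rfl
    have hSA' : S \ A = (S \ {v}) \ A ∪ {v} := by
      ext x
      by_cases hxv : x = v
      · subst hxv; simp [hvS, hvA]
      · simp [hxv]
    rw [hSA']
    exact connected_induce_union hSA.preconnected (connected_induce_singleton v).preconnected
      ⟨hy, hyA⟩ rfl hvy.symm

end SimpleGraph

section MinorModel

variable {α V : Type*} {H : SimpleGraph α} {G : SimpleGraph V} {X : α → Set V}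

lemma IsMinorModel.disjoint (hX : IsMinorModel H G X) {a b : α} (hab : a ≠ b) :
    Disjoint (X a) (X b) :=
  hX.1 a b hab

lemma IsMinorModel.connected (hX : IsMinorModel H G X) (a : α) : (G.induce (X a)).Connected :=
  hX.2.1 a

lemma IsMinorModel.touches (hX : IsMinorModel H G X) {a b : α} (hab : H.Adj a b) :
    G.Touches (X a) (X b) :=
  hX.2.2 hab

structure IsMinimalMinorModel [Fintype α] (H : SimpleGraph α) (G : SimpleGraph V)
    (X : α → Set V) : Prop where
  isMinorModel : IsMinorModel H G X
  sum_ncard_le : ∀ Y, IsMinorModel H G Y → ∑ a, (X a).ncard ≤ ∑ a, (Y a).ncard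

lemma IsMinorModel.exists_isMinimalMinorModel [Fintype α] (hX : IsMinorModel H G X) :
    ∃ Y, IsMinimalMinorModel H G Y := by
  obtain ⟨Y, hY, hmin⟩ := (measure fun Y : α → Set V => ∑ a, (Y a).ncard).wf.has_min
    {Y | IsMinorModel H G Y} ⟨X, hX⟩
  exact ⟨Y, hY, fun Z hZ => not_lt.1 (hmin Z hZ)⟩

lemma IsMinimalMinorModel.eq_of_touches [Fintype α] [Finite V] (hX : IsMinimalMinorModel H G X)
    {a : α} {S : Set V} (hSX : S ⊆ X a) (hS : (G.induce S).Connected)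
    (hT : ∀ b, H.Adj a b → G.Touches S (X b)) : S = X a := by
  classical
  by_contra hne
  set Y := Function.update X a S
  have hYa : Y a = S := Function.update_self a S X
  have hYb : ∀ b, b ≠ a → Y b = X b := fun b hb => Function.update_of_ne hb S X
  have hYX : ∀ b, Y b ⊆ X b := fun b => by
    rcases eq_or_ne b a with rfl | hb
    · rwa [hYa]
    · rw [hYb b hb]
  have hY : IsMinorModel H G Y := by
    refine ⟨fun b c hbc => (hX.1.disjoint hbc).mono (hYX b) (hYX c), fun b => ?_, fun b c hbc => ?_⟩
    · rcases eq_or_ne b a with rfl | hb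
      · rwa [hYa]
      · rw [hYb b hb]; exact hX.1.connected b
    · show G.Touches (Y b) (Y c)
      rcases eq_or_ne b a with rfl | hb
      · rw [hYa, hYb c hbc.ne']; exact hT c hbc
      rcases eq_or_ne c a with rfl | hc
      · rw [hYa, hYb b hb]; exact (hT b hbc.symm).symm
      rw [hYb b hb, hYb c hc]; exact hX.1.touches hbc
  have hlt : ∑ b, (Y b).ncard < ∑ b, (X b).ncard :=
    Finset.sum_lt_sum (fun b _ => Set.ncard_le_ncard (hYX b))
      ⟨a, Finset.mem_univ a, Set.ncard_lt_ncard (hYa ▸ hSX.ssubset_of_ne hne)⟩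
  exact (hX.2 Y hY).not_gt hlt

lemma hasInducedMinor_wheel4 {a b c d h : Set V}
    (hab : Disjoint a b) (hac : Disjoint a c) (had : Disjoint a d) (hah : Disjoint a h)
    (hbc : Disjoint b c) (hbd : Disjoint b d) (hbh : Disjoint b h) (hcd : Disjoint c d)
    (hch : Disjoint c h) (hdh : Disjoint d h)
    (ha : (G.induce a).Connected) (hb : (G.induce b).Connected) (hc : (G.induce c).Connected)
    (hd : (G.induce d).Connected) (hh : (G.induce h).Connected)
    (tab : G.Touches a b) (tbc : G.Touches b c) (tcd : G.Touches c d) (tda : G.Touches d a)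
    (tha : G.Touches h a) (thb : G.Touches h b) (thc : G.Touches h c) (thd : G.Touches h d)
    (nac : ¬ G.Touches a c) (nbd : ¬ G.Touches b d) : HasInducedMinor G wheel4 := by
  have nca : ¬ G.Touches c a := fun t => nac t.symm
  have ndb : ¬ G.Touches d b := fun t => nbd t.symm
  refine ⟨![a, b, c, d, h], fun u v huv => ?_, fun u => ?_, fun u v huv => ?_⟩
  · fin_cases u <;> fin_cases v <;> simp_all [Disjoint.symm]
  · fin_cases u <;> assumption
  · change G.Touches _ _ ↔ _
    fin_cases u <;> fin_cases v <;> simp_all [wheel4, Touches.symm]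

end MinorModel

section CliqueModel

variable {α V : Type*} {G : SimpleGraph V} {X : α → Set V}

lemma IsMinorModel.hasInducedMinor_wheel4_of_split (hX : IsMinorModel ⊤ G X) {i P Q : α}
    {A K : Set V} (hA : A ⊆ X i) (hAc : (G.induce A).Connected)
    (hA'c : (G.induce (X i \ A)).Connected) (hP : P ≠ i) (hQ : Q ≠ i)
    (hPA : G.Touches (X P) A) (hPA' : ¬ G.Touches (X P) (X i \ A))
    (hQA' : G.Touches (X Q) (X i \ A)) (hQA : ¬ G.Touches (X Q) A)
    (hK : (G.induce K).Connected) (hKi : Disjoint K (X i)) (hKP : Disjoint K (X P))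
    (hKQ : Disjoint K (X Q)) (hKA : G.Touches K A) (hKA' : G.Touches K (X i \ A))
    (hKP' : G.Touches K (X P)) (hKQ' : G.Touches K (X Q)) :
    HasInducedMinor G wheel4 := by
  have hPQ : P ≠ Q := by rintro rfl; exact hQA hPA
  have hA' : X i \ A ⊆ X i := Set.sdiff_subset
  exact hasInducedMinor_wheel4 disjoint_sdiff_self_right
    ((hX.disjoint hQ.symm).mono_left hA) ((hX.disjoint hP.symm).mono_left hA)
    (hKi.mono_right hA).symm ((hX.disjoint hQ.symm).mono_left hA')
    ((hX.disjoint hP.symm).mono_left hA') (hKi.mono_right hA').symm (hX.disjoint hPQ.symm)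
    hKQ.symm hKP.symm hAc hA'c (hX.connected Q) (hX.connected P) hK
    ((hX.connected i).touches_diff hA (nonempty_of_connected_induce hAc)
      (nonempty_of_connected_induce hA'c))
    hQA'.symm (hX.touches hPQ.symm) hPA hKA hKA' hKQ' hKP' (fun t => hQA t.symm)
    (fun t => hPA' t.symm)

section

variable [Fintype α] [Finite V]

lemma IsMinimalMinorModel.not_touches_of_split (hX : IsMinimalMinorModel ⊤ G X)
    (hW : ¬ HasInducedMinor G wheel4) {i r : α} {A : Set V} (hA : A ⊆ X i)
    (hAc : (G.induce A).Connected) (hA'c : (G.induce (X i \ A)).Connected) (hr : r ≠ i)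
    (hrA : G.Touches (X r) A) : ¬ G.Touches (X r) (X i \ A) := by
  intro hrA'
  obtain ⟨a, ha⟩ := nonempty_of_connected_induce hAc
  obtain ⟨a', ha'⟩ := nonempty_of_connected_induce hA'c
  -- by minimality, neither side of the split is touched by all other bags
  obtain ⟨P, hP, hPA'⟩ : ∃ P ≠ i, ¬ G.Touches (X P) (X i \ A) := by
    by_contra! h
    have := hX.eq_of_touches Set.sdiff_subset hA'c fun b hb => (h b hb.ne').symm
    exact (this.symm ▸ hA ha : a ∈ X i \ A).2 ha
  obtain ⟨Q, hQ, hQA⟩ : ∃ Q ≠ i, ¬ G.Touches (X Q) A := by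
    by_contra! h
    have := hX.eq_of_touches hA hAc fun b hb => (h b hb.ne').symm
    exact ha'.2 (this.symm ▸ ha'.1)
  have hPA : G.Touches (X P) A := by
    by_contra h
    exact hPA' ((hX.1.touches hP).diff h)
  have hrP : r ≠ P := by rintro rfl; exact hPA' hrA'
  have hrQ : r ≠ Q := by rintro rfl; exact hQA hrA
  exact hW <| hX.1.hasInducedMinor_wheel4_of_split hA hAc hA'c hP hQ hPA hPA'
    ((hX.1.touches hQ).diff hQA) hQA (hX.1.connected r) (hX.1.disjoint hr) (hX.1.disjoint hrP)
    (hX.1.disjoint hrQ) hrA hrA' (hX.1.touches hrP) (hX.1.touches hrQ)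

lemma IsMinimalMinorModel.eq_of_adj (hX : IsMinimalMinorModel ⊤ G X)
    (hW : ¬ HasInducedMinor G wheel4) {i j : α} (hji : j ≠ i) {x x' y y' : V} (hx : x ∈ X i)
    (hx' : x' ∈ X i) (hy : y ∈ X j) (hy' : y' ∈ X j) (hxy : G.Adj x y) (hxy' : G.Adj x' y') :
    x = x' := by
  by_contra hne
  obtain ⟨A, hA, hxA, hx'A, hAc, hA'c⟩ :=
    (hX.1.connected i).exists_connected_induce_partition hx hx' hne
  exact hX.not_touches_of_split hW hA hAc hA'c hji ⟨y, hy, x, hxA, hxy.symm⟩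
    ⟨y', hy', x', ⟨hx', hx'A⟩, hxy'.symm⟩

end

variable [Nonempty V]

/-- A vertex of `X i` with a neighbour in `X j`, if there is one (junk otherwise). In a minimal
`W₄`-free model of a complete graph it is the only vertex of `X i` with a neighbour in `X j`. -/
noncomputable def attachment (G : SimpleGraph V) (X : α → Set V) (i j : α) : V :=
  Classical.epsilon fun v => v ∈ X i ∧ ∃ y ∈ X j, G.Adj v y

lemma IsMinorModel.attachment_spec (hX : IsMinorModel ⊤ G X) {i j : α} (hij : i ≠ j) :
    attachment G X i j ∈ X i ∧ ∃ y ∈ X j, G.Adj (attachment G X i j) y :=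
  Classical.epsilon_spec (hX.touches hij)

lemma IsMinorModel.attachment_mem (hX : IsMinorModel ⊤ G X) {i j : α} (hij : i ≠ j) :
    attachment G X i j ∈ X i :=
  (hX.attachment_spec hij).1

def IsHeavy (G : SimpleGraph V) (X : α → Set V) (i : α) (v : V) : Prop :=
  ∃ j k, j ≠ k ∧ j ≠ i ∧ k ≠ i ∧ attachment G X i j = v ∧ attachment G X i k = v

/-- In a minimal model, exactly one other bag attaches at a private leaf: its owner. -/
def IsPrivateLeaf (G : SimpleGraph V) (X : α → Set V) (i : α) (u : V) : Prop :=
  u ∈ X i ∧ (G.induce (X i \ {u})).Connected ∧ ¬ IsHeavy G X i u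

lemma IsPrivateLeaf.eq_of_attachment_eq {i j k : α} {u : V} (hu : IsPrivateLeaf G X i u)
    (hj : j ≠ i) (hk : k ≠ i) (hju : attachment G X i j = u) (hku : attachment G X i k = u) :
    j = k := by
  by_contra hjk
  exact hu.2.2 ⟨j, k, hjk, hj, hk, hju, hku⟩

variable [Fintype α] [Finite V]

lemma IsMinimalMinorModel.eq_attachment (hX : IsMinimalMinorModel ⊤ G X)
    (hW : ¬ HasInducedMinor G wheel4) {i j : α} (hji : j ≠ i) {x y : V} (hx : x ∈ X i)
    (hy : y ∈ X j) (hxy : G.Adj x y) : x = attachment G X i j :=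
  let ⟨hmem, _, hy', hadj⟩ := hX.1.attachment_spec hji.symm
  hX.eq_of_adj hW hji hx hmem hy hy' hxy hadj

lemma IsMinimalMinorModel.adj_attachment (hX : IsMinimalMinorModel ⊤ G X)
    (hW : ¬ HasInducedMinor G wheel4) {i j : α} (hij : i ≠ j) :
    G.Adj (attachment G X i j) (attachment G X j i) := by
  obtain ⟨x, hx, y, hy, hxy⟩ := hX.1.touches hij
  rwa [← hX.eq_attachment hW hij.symm hx hy hxy, ← hX.eq_attachment hW hij hy hx hxy.symm]

lemma IsMinimalMinorModel.touches_of_attachment_mem (hX : IsMinimalMinorModel ⊤ G X)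
    (hW : ¬ HasInducedMinor G wheel4) {i j : α} (hij : i ≠ j) {A B : Set V}
    (hA : attachment G X i j ∈ A) (hB : attachment G X j i ∈ B) : G.Touches A B :=
  ⟨_, hA, _, hB, hX.adj_attachment hW hij⟩

lemma IsMinimalMinorModel.touches_iff_attachment_mem (hX : IsMinimalMinorModel ⊤ G X)
    (hW : ¬ HasInducedMinor G wheel4) {i j : α} (hji : j ≠ i) {A : Set V} (hA : A ⊆ X i) :
    G.Touches (X j) A ↔ attachment G X i j ∈ A := by
  refine ⟨fun ⟨y, hy, x, hx, hyx⟩ => ?_, fun h =>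
    (hX.touches_of_attachment_mem hW hji.symm h (hX.1.attachment_mem hji)).symm⟩
  rwa [← hX.eq_attachment hW hji (hA hx) hy hyx.symm]

lemma IsMinimalMinorModel.exists_attachment_eq (hX : IsMinimalMinorModel ⊤ G X)
    (hW : ¬ HasInducedMinor G wheel4) {i : α} {u : V} (hu : u ∈ X i)
    (hc : (G.induce (X i \ {u})).Connected) : ∃ j ≠ i, attachment G X i j = u := by
  by_contra! h
  have := hX.eq_of_touches Set.sdiff_subset hc fun j hij =>
    ((hX.touches_iff_attachment_mem hW hij.ne' Set.sdiff_subset).2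
      ⟨hX.1.attachment_mem hij, h j hij.ne'⟩).symm
  exact (this.symm ▸ hu : u ∈ X i \ {u}).2 rfl

/-- Otherwise `A`, `X i \ A`, `X k₁`, `X j₁` would be the rim and `X j₂ ∪ X k₂` the hub of a
`W₄`. -/
lemma IsMinimalMinorModel.eq_of_attachment_not_mem (hX : IsMinimalMinorModel ⊤ G X)
    (hW : ¬ HasInducedMinor G wheel4) {i j₁ j₂ k₁ k₂ : α} {A : Set V} (hA : A ⊆ X i)
    (hAc : (G.induce A).Connected) (hA'c : (G.induce (X i \ A)).Connected) (hj₁ : j₁ ≠ i)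
    (hj₂ : j₂ ≠ i) (hk₁ : k₁ ≠ i) (hk₂ : k₂ ≠ i) (hj : j₁ ≠ j₂)
    (hj₁A : attachment G X i j₁ ∈ A) (hj₂A : attachment G X i j₂ ∈ A)
    (hk₁A : attachment G X i k₁ ∉ A) (hk₂A : attachment G X i k₂ ∉ A) : k₁ = k₂ := by
  by_contra hk
  have hA' : X i \ A ⊆ X i := Set.sdiff_subset
  have hmem : ∀ {l}, l ≠ i → attachment G X i l ∈ X i := fun hl => hX.1.attachment_mem hl.symm
  have hne : ∀ {j k}, attachment G X i j ∈ A → attachment G X i k ∉ A → j ≠ k := by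
    rintro j k hj hk rfl; exact hk hj
  have hK : (G.induce (X j₂ ∪ X k₂)).Connected :=
    connected_induce_union (hX.1.connected j₂).preconnected (hX.1.connected k₂).preconnected
      (hX.1.attachment_mem (hne hj₂A hk₂A)) (hX.1.attachment_mem (hne hj₂A hk₂A).symm)
      (hX.adj_attachment hW (hne hj₂A hk₂A))
  exact hW <| hX.1.hasInducedMinor_wheel4_of_split (P := j₁) (Q := k₁) hA hAc hA'c hj₁ hk₁
    ((hX.touches_iff_attachment_mem hW hj₁ hA).2 hj₁A)
    (fun h => ((hX.touches_iff_attachment_mem hW hj₁ hA').1 h).2 hj₁A)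
    ((hX.touches_iff_attachment_mem hW hk₁ hA').2 ⟨hmem hk₁, hk₁A⟩)
    (fun h => hk₁A ((hX.touches_iff_attachment_mem hW hk₁ hA).1 h)) hK
    (Set.disjoint_union_left.2 ⟨hX.1.disjoint hj₂, hX.1.disjoint hk₂⟩)
    (Set.disjoint_union_left.2 ⟨hX.1.disjoint hj.symm, hX.1.disjoint (hne hj₁A hk₂A).symm⟩)
    (Set.disjoint_union_left.2 ⟨hX.1.disjoint (hne hj₂A hk₁A), hX.1.disjoint (Ne.symm hk)⟩)
    (((hX.touches_iff_attachment_mem hW hj₂ hA).2 hj₂A).mono Set.subset_union_left subset_rfl)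
    (((hX.touches_iff_attachment_mem hW hk₂ hA').2 ⟨hmem hk₂, hk₂A⟩).mono
      Set.subset_union_right subset_rfl)
    ((hX.1.touches (hne hj₁A hk₂A).symm).mono Set.subset_union_right subset_rfl)
    ((hX.1.touches (hne hj₂A hk₁A)).mono Set.subset_union_left subset_rfl)

lemma IsMinimalMinorModel.eq_of_isHeavy (hX : IsMinimalMinorModel ⊤ G X)
    (hW : ¬ HasInducedMinor G wheel4) {i : α} {v v' : V} (hv : IsHeavy G X i v)
    (hv' : IsHeavy G X i v') : v = v' := by
  by_contra hne
  obtain ⟨j₁, j₂, hj, hj₁, hj₂, rfl, hj₂v⟩ := hv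
  obtain ⟨k₁, k₂, hk, hk₁, hk₂, rfl, hk₂v⟩ := hv'
  obtain ⟨A, hA, hvA, hv'A, hAc, hA'c⟩ := (hX.1.connected i).exists_connected_induce_partition
    (hX.1.attachment_mem hj₁.symm) (hX.1.attachment_mem hk₁.symm) hne
  exact hk (hX.eq_of_attachment_not_mem hW hA hAc hA'c hj₁ hj₂ hk₁ hk₂ hj hvA (hj₂v ▸ hvA)
    hv'A (hk₂v ▸ hv'A))

lemma IsMinimalMinorModel.eq_of_isHeavy_of_attachment_ne (hX : IsMinimalMinorModel ⊤ G X)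
    (hW : ¬ HasInducedMinor G wheel4) {i l m : α} {h : V} (hh : IsHeavy G X i h)
    (hc : (G.induce (X i \ {h})).Connected) (hl : l ≠ i) (hm : m ≠ i)
    (hlh : attachment G X i l ≠ h) (hmh : attachment G X i m ≠ h) : l = m := by
  obtain ⟨j₁, j₂, hj, hj₁, hj₂, hj₁h, hj₂h⟩ := hh
  exact hX.eq_of_attachment_not_mem hW
    (Set.singleton_subset_iff.2 (hj₁h ▸ hX.1.attachment_mem hj₁.symm))
    (connected_induce_singleton h) hc hj₁ hj₂ hl hm hj hj₁h hj₂h hlh hmh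

/-- Otherwise `X B \ {u}`, `X C \ {v}`, `X D`, `X E` would be the rim of a `W₄`, with any fifth
bag as hub. -/
lemma IsMinimalMinorModel.eq_of_isPrivateLeaf (hX : IsMinimalMinorModel ⊤ G X)
    (hW : ¬ HasInducedMinor G wheel4) (hα : 5 ≤ Fintype.card α) {B C D E : α} {u v : V}
    (hu : IsPrivateLeaf G X B u) (hv : IsPrivateLeaf G X C v) (hD : D ≠ B) (hE : E ≠ C)
    (hDu : attachment G X B D = u) (hEv : attachment G X C E = v) (hBC : B ≠ C) (hDC : D ≠ C)
    (hEB : E ≠ B) : D = E := by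
  classical
  by_contra hDE
  obtain ⟨J, -, hJ⟩ := Finset.exists_mem_notMem_of_card_lt_card (s := {B, C, D, E})
    (t := Finset.univ) (Finset.card_le_four.trans_lt (by rw [Finset.card_univ]; omega))
  simp only [Finset.mem_insert, Finset.mem_singleton, not_or] at hJ
  obtain ⟨hJB, hJC, hJD, hJE⟩ : J ≠ B ∧ J ≠ C ∧ J ≠ D ∧ J ≠ E := hJ
  have hBl : ∀ {l}, l ≠ B → l ≠ D → attachment G X B l ∈ X B \ {u} := fun hl hlD =>
    ⟨hX.1.attachment_mem hl.symm, fun h => hlD (hu.eq_of_attachment_eq hl hD h hDu)⟩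
  have hCl : ∀ {l}, l ≠ C → l ≠ E → attachment G X C l ∈ X C \ {v} := fun hl hlE =>
    ⟨hX.1.attachment_mem hl.symm, fun h => hlE (hv.eq_of_attachment_eq hl hE h hEv)⟩
  refine hW <| hasInducedMinor_wheel4 (a := X B \ {u}) (b := X C \ {v}) (c := X D) (d := X E)
    (h := X J) ((hX.1.disjoint hBC).mono Set.sdiff_subset Set.sdiff_subset)
    ((hX.1.disjoint hD.symm).mono_left Set.sdiff_subset)
    ((hX.1.disjoint hEB.symm).mono_left Set.sdiff_subset)
    ((hX.1.disjoint hJB.symm).mono_left Set.sdiff_subset)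
    ((hX.1.disjoint hDC.symm).mono_left Set.sdiff_subset)
    ((hX.1.disjoint hE.symm).mono_left Set.sdiff_subset)
    ((hX.1.disjoint hJC.symm).mono_left Set.sdiff_subset) (hX.1.disjoint hDE)
    (hX.1.disjoint (Ne.symm hJD)) (hX.1.disjoint (Ne.symm hJE)) hu.2.1 hv.2.1 (hX.1.connected D)
    (hX.1.connected E) (hX.1.connected J)
    (hX.touches_of_attachment_mem hW hBC (hBl hBC.symm hDC.symm) (hCl hBC hEB.symm))
    (hX.touches_of_attachment_mem hW hDC.symm (hCl hDC hDE) (hX.1.attachment_mem hDC))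
    (hX.1.touches hDE)
    (hX.touches_of_attachment_mem hW hEB (hX.1.attachment_mem hEB) (hBl hEB (Ne.symm hDE)))
    (hX.touches_of_attachment_mem hW hJB (hX.1.attachment_mem hJB) (hBl hJB hJD))
    (hX.touches_of_attachment_mem hW hJC (hX.1.attachment_mem hJC) (hCl hJC hJE))
    (hX.1.touches hJD) (hX.1.touches hJE)
    (fun h => ((hX.touches_iff_attachment_mem hW hD Set.sdiff_subset).1 h.symm).2 hDu)
    (fun h => ((hX.touches_iff_attachment_mem hW hE Set.sdiff_subset).1 h.symm).2 hEv)

lemma IsMinimalMinorModel.exists_common_attachment (hX : IsMinimalMinorModel ⊤ G X)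
    (hW : ¬ HasInducedMinor G wheel4) {T : Finset α} {k : α}
    (hunique : ∀ u u', IsPrivateLeaf G X k u → IsPrivateLeaf G X k u' → u = u')
    (howner : ∀ g ≠ k, IsPrivateLeaf G X k (attachment G X k g) → g ∈ T) :
    ∃ x ∈ X k, ∀ l ∉ T, l ≠ k → attachment G X k l = x := by
  obtain ⟨x, hx⟩ := nonempty_of_connected_induce (hX.1.connected k)
  by_cases hnt : (X k).Nontrivial
  swap
  · exact ⟨x, hx, fun l _ hl =>
      Set.not_nontrivial_iff.1 hnt (hX.1.attachment_mem (Ne.symm hl)) hx⟩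
  -- of two non-cut vertices, one is the heavy vertex and the other a private leaf
  suffices key : ∀ h u, h ≠ u → h ∈ X k → (G.induce (X k \ {h})).Connected →
      IsHeavy G X k h → IsPrivateLeaf G X k u →
      ∃ x ∈ X k, ∀ l ∉ T, l ≠ k → attachment G X k l = x by
    obtain ⟨v₁, hv₁, v₂, hv₂, hne, hc₁, hc₂⟩ :=
      (hX.1.connected k).exists_ne_connected_induce_diff_singleton hnt
    by_cases hh₁ : IsHeavy G X k v₁ <;> by_cases hh₂ : IsHeavy G X k v₂
    · exact absurd (hX.eq_of_isHeavy hW hh₁ hh₂) hne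
    · exact key v₁ v₂ hne hv₁ hc₁ hh₁ ⟨hv₂, hc₂, hh₂⟩
    · exact key v₂ v₁ hne.symm hv₂ hc₂ hh₂ ⟨hv₁, hc₁, hh₁⟩
    · exact absurd (hunique v₁ v₂ ⟨hv₁, hc₁, hh₁⟩ ⟨hv₂, hc₂, hh₂⟩) hne
  intro h u hne hh hch hheavy hu
  obtain ⟨g, hg, rfl⟩ := hX.exists_attachment_eq hW hu.1 hu.2.1
  refine ⟨h, hh, fun l hl hlk => ?_⟩
  by_contra hlh
  exact hl (hX.eq_of_isHeavy_of_attachment_ne hW hheavy hch hlk hg hlh (Ne.symm hne) ▸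
    howner g hg hu)

lemma IsMinimalMinorModel.exists_card_le_three_common_attachment (hX : IsMinimalMinorModel ⊤ G X)
    (hW : ¬ HasInducedMinor G wheel4) (hα : 5 ≤ Fintype.card α) :
    ∃ T : Finset α, T.card ≤ 3 ∧
      ∀ k ∉ T, ∃ x ∈ X k, ∀ l ∉ T, l ≠ k → attachment G X k l = x := by
  classical
  by_cases hI : ∃ B u₁ u₂, u₁ ≠ u₂ ∧ IsPrivateLeaf G X B u₁ ∧ IsPrivateLeaf G X B u₂
  · obtain ⟨B, u₁, u₂, hu, hu₁, hu₂⟩ := hI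
    obtain ⟨D₁, hD₁, hD₁u⟩ := hX.exists_attachment_eq hW hu₁.1 hu₁.2.1
    obtain ⟨D₂, hD₂, hD₂u⟩ := hX.exists_attachment_eq hW hu₂.1 hu₂.2.1
    have hD : D₁ ≠ D₂ := by rintro rfl; exact hu (hD₁u.symm.trans hD₂u)
    have hB : ∀ k ∉ ({B, D₁, D₂} : Finset α), ∀ g ≠ k,
        IsPrivateLeaf G X k (attachment G X k g) → g = B := by
      intro k hk g hg hleaf
      simp only [Finset.mem_insert, Finset.mem_singleton, not_or] at hk
      by_contra hgB
      exact hD <| (hX.eq_of_isPrivateLeaf hW hα hu₁ hleaf hD₁ hg hD₁u rfl (Ne.symm hk.1)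
        (Ne.symm hk.2.1) hgB).trans
        (hX.eq_of_isPrivateLeaf hW hα hu₂ hleaf hD₂ hg hD₂u rfl (Ne.symm hk.1)
          (Ne.symm hk.2.2) hgB).symm
    refine ⟨{B, D₁, D₂}, Finset.card_le_three, fun k hk => hX.exists_common_attachment hW ?_ ?_⟩
    · intro u u' hu hu'
      obtain ⟨g, hg, rfl⟩ := hX.exists_attachment_eq hW hu.1 hu.2.1
      obtain ⟨g', hg', rfl⟩ := hX.exists_attachment_eq hW hu'.1 hu'.2.1
      rw [hB k hk g hg hu, hB k hk g' hg' hu']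
    · intro g hg hleaf
      simp [hB k hk g hg hleaf]
  push Not at hI
  have hunique : ∀ k u u', IsPrivateLeaf G X k u → IsPrivateLeaf G X k u' → u = u' :=
    fun k u u' hu hu' => by_contra fun hne => hI k u u' hne hu hu'
  by_cases hL : ∃ B u, IsPrivateLeaf G X B u
  · obtain ⟨B, u, hu⟩ := hL
    obtain ⟨D, hD, hDu⟩ := hX.exists_attachment_eq hW hu.1 hu.2.1
    refine ⟨{B, D}, Finset.card_le_two.trans (by norm_num), fun k hk =>
      hX.exists_common_attachment hW (hunique k) fun g hg hleaf => ?_⟩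
    simp only [Finset.mem_insert, Finset.mem_singleton, not_or] at hk ⊢
    by_contra! hgB
    exact hgB.2 (hX.eq_of_isPrivateLeaf hW hα hu hleaf hD hg hDu rfl (Ne.symm hk.1)
      (Ne.symm hk.2) hgB.1).symm
  · push Not at hL
    exact ⟨∅, by simp, fun k hk =>
      hX.exists_common_attachment hW (hunique k) fun g _ hleaf => (hL k _ hleaf).elim⟩

end CliqueModel

lemma IsMinimalMinorModel.card_le_cliqueNum_add_three {α V : Type*} [Fintype α] [Finite V]
    {G : SimpleGraph V} {X : α → Set V} (hX : IsMinimalMinorModel ⊤ G X)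
    (hW : ¬ HasInducedMinor G wheel4) : Fintype.card α ≤ G.cliqueNum + 3 := by
  classical
  obtain hα | ⟨⟨i⟩⟩ := isEmpty_or_nonempty α
  · simp
  obtain ⟨v, -⟩ := nonempty_of_connected_induce (hX.1.connected i)
  have : Nonempty V := ⟨v⟩
  have hω : 1 ≤ G.cliqueNum := by
    simpa using IsClique.card_le_cliqueNum (t := {v}) (tc := by simp)
  rcases lt_or_ge (Fintype.card α) 5 with hα | hα
  · omega
  obtain ⟨T, hT, hcenter⟩ := hX.exists_card_le_three_common_attachment hW hα
  choose! ξ hξX hξ using hcenter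
  have hinj : Set.InjOn ξ ↑Tᶜ := fun j hj k hk hjk => by
    by_contra hne
    exact (hX.1.disjoint hne).ne_of_mem (hξX j (by simpa using hj)) (hξX k (by simpa using hk)) hjk
  have hclique : G.IsClique (Tᶜ.image ξ : Set V) := by
    rw [Finset.coe_image, Finset.coe_compl]
    rintro _ ⟨j, hj, rfl⟩ _ ⟨k, hk, rfl⟩ hjk
    have hne : j ≠ k := by rintro rfl; exact hjk rfl
    rw [← hξ j hj k hk hne.symm, ← hξ k hk j hj hne]
    exact hX.adj_attachment hW hne
  have := hclique.card_le_cliqueNum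
  rw [Finset.card_image_of_injOn hinj, Finset.card_compl] at this
  omega

theorem hadwigerNumber_le_cliqueNum_add_three {V : Type*} [Finite V] (G : SimpleGraph V)
    (h : ¬ HasInducedMinor G wheel4) : hadwigerNumber G ≤ G.cliqueNum + 3 := by
  refine csSup_le' fun p ⟨X, hX⟩ => ?_
  obtain ⟨Y, hY⟩ := hX.exists_isMinimalMinorModel
  simpa using hY.card_le_cliqueNum_add_three h

/-- If `G` has no `W₄` induced minor, then its Hadwiger number satisfies
`η(G) ≤ ω(G) + 5`. -/
theorem hadwiger_le_of_no_W4_inducedMinor {V : Type} [Fintype V] (G : SimpleGraph V)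
    (h : ¬ HasInducedMinor G wheel4) :
    hadwigerNumber G ≤ G.cliqueNum + 5 :=
  (hadwigerNumber_le_cliqueNum_add_three G h).trans (by omega)
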